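/- arXiv:2007.14925 — 3 statements merged into one kernel-verified Lean document; each statement's English description precedes it below -/
import Mathlib

section
/- Identity principle: let f, g : Ω_D → ℍ be slice functions, and suppose there exist I₁,…,Iₙ ∈ 𝕊 such that f = g on Ω_D ∩ (ℂ_{I₁}×⋯×ℂ_{Iₙ}). Then f = g on the whole Ω_D. -/
noncomputable section

abbrev ℍ := Quaternion ℝ

/-- The sphere of quaternionic imaginary units. -/
def Sph : Set ℍ := {J | J ^ 2 = -1}

/-- The complex slice `ℂ_J = {a + b J : a b : ℝ}`. -/
def CJ (J : ℍ) : Set ℍ := {x | ∃ a b : ℝ, x = (a : ℍ) + (b : ℍ) * J}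

variable {n : ℕ}

/-- Conjugation of the `h`-th complex coordinate. -/
def conjCoord (h : Fin n) (z : Fin n → ℂ) : Fin n → ℂ :=
  Function.update z h (starRingEnd ℂ (z h))

/-- Quaternionic conjugation of the coordinates with index in `H`. -/
def conjQ (H : Finset (Fin n)) (x : Fin n → ℍ) : Fin n → ℍ :=
  fun h => if h ∈ H then star (x h) else x h

/-- Ordered product `J_K` of the values of `J` over `K`, in increasing index order. -/
def JK (J : Fin n → ℍ) (K : Finset (Fin n)) : ℍ :=
  ((K.sort (· ≤ ·)).map J).prod

/-- The complex point with coordinates `α h + i β h`. -/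
def zOf (α β : Fin n → ℝ) : Fin n → ℂ :=
  fun h => (α h : ℂ) + (β h : ℂ) * Complex.I

/-- The quaternionic point with coordinates `α h + β h * J h`. -/
def ptOf (α β : Fin n → ℝ) (J : Fin n → ℍ) : Fin n → ℍ :=
  fun h => (α h : ℍ) + (β h : ℍ) * J h

/-- The circularization `Ω_D` of `D ⊆ ℂⁿ` in `ℍⁿ`. -/
def OmegaD (D : Set (Fin n → ℂ)) : Set (Fin n → ℍ) :=
  {x | ∃ α β : Fin n → ℝ, ∃ J : Fin n → ℍ,
    (∀ h, J h ∈ Sph) ∧ x = ptOf α β J ∧ zOf α β ∈ D}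

/-- Invariance of `D` under all coordinatewise complex conjugations. -/
def ConjInv (D : Set (Fin n → ℂ)) : Prop :=
  ∀ h : Fin n, ∀ z ∈ D, conjCoord h z ∈ D

/-- Stem function condition for a family `F = (F_K)`. -/
def IsStem (D : Set (Fin n → ℂ)) (F : Finset (Fin n) → (Fin n → ℂ) → ℍ) : Prop :=
  ∀ (K : Finset (Fin n)) (h : Fin n), ∀ z ∈ D,
    F K (conjCoord h z) = (if h ∈ K then -1 else 1) * F K z

/-- `f` is the slice function induced by the stem function `F` on `Ω_D`. -/
def Induces (D : Set (Fin n → ℂ)) (F : Finset (Fin n) → (Fin n → ℂ) → ℍ)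
    (f : (Fin n → ℍ) → ℍ) : Prop :=
  ∀ (α β : Fin n → ℝ) (J : Fin n → ℍ), (∀ h, J h ∈ Sph) → zOf α β ∈ D →
    f (ptOf α β J) = ∑ K : Finset (Fin n), JK J K * F K (zOf α β)

/-- `f` is a slice function on `Ω_D`. -/
def IsSlice (D : Set (Fin n → ℂ)) (f : (Fin n → ℍ) → ℍ) : Prop :=
  ∃ F, IsStem D F ∧ Induces D F f

/-- Each component of the stem function is of class `C¹` on `D`. -/
def StemC1 (D : Set (Fin n → ℂ)) (F : Finset (Fin n) → (Fin n → ℂ) → ℍ) : Prop :=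
  ∀ K, ContDiffOn ℝ 1 (F K) D

/-- Holomorphy (Cauchy–Riemann system) of a stem function. -/
def StemHolo (D : Set (Fin n → ℂ)) (F : Finset (Fin n) → (Fin n → ℂ) → ℍ) : Prop :=
  ∀ z ∈ D, ∀ h : Fin n, ∀ K : Finset (Fin n), h ∉ K →
    fderiv ℝ (F K) z (Pi.single h 1) =
      fderiv ℝ (F (insert h K)) z (Pi.single h Complex.I) ∧
    fderiv ℝ (F K) z (Pi.single h Complex.I) =
      -fderiv ℝ (F (insert h K)) z (Pi.single h 1)

/-- `f` is a slice regular function on `Ω_D`. -/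
def IsSliceRegular (D : Set (Fin n → ℂ)) (f : (Fin n → ℍ) → ℍ) : Prop :=
  ∃ F, IsStem D F ∧ StemC1 D F ∧ StemHolo D F ∧ Induces D F f

/-- Pointwise product of stem functions associated with `σ`. -/
def SP (σ : Finset (Fin n) → Finset (Fin n) → ℝ)
    (F G : Finset (Fin n) → (Fin n → ℂ) → ℍ) :
    Finset (Fin n) → (Fin n → ℂ) → ℍ :=
  fun K z => ∑ H : Finset (Fin n), ∑ L : Finset (Fin n),
    if symmDiff H L = K then σ H L • (F H z * G L z) else 0

/-- The tensor-product sign function `σ_⊗(K,H) = (-1)^{|K∩H|}`. -/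
def sigmaT : Finset (Fin n) → Finset (Fin n) → ℝ :=
  fun K H => (-1 : ℝ) ^ (K ∩ H).card

/-- The tensor (slice) product of stem functions. -/
def SPT (F G : Finset (Fin n) → (Fin n → ℂ) → ℍ) :
    Finset (Fin n) → (Fin n → ℂ) → ℍ := SP sigmaT F G

/-- The stem function `∂_h F`. -/
def Dplus (F : Finset (Fin n) → (Fin n → ℂ) → ℍ) (h : Fin n) :
    Finset (Fin n) → (Fin n → ℂ) → ℍ :=
  fun K z => (2 : ℝ)⁻¹ • (fderiv ℝ (F K) z (Pi.single h 1) +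
    ((-1 : ℝ) ^ (K ∩ {h}).card) •
      fderiv ℝ (F (symmDiff K {h})) z (Pi.single h Complex.I))

/-- The stem function `∂̄_h F`. -/
def Dminus (F : Finset (Fin n) → (Fin n → ℂ) → ℍ) (h : Fin n) :
    Finset (Fin n) → (Fin n → ℂ) → ℍ :=
  fun K z => (2 : ℝ)⁻¹ • (fderiv ℝ (F K) z (Pi.single h 1) -
    ((-1 : ℝ) ^ (K ∩ {h}).card) •
      fderiv ℝ (F (symmDiff K {h})) z (Pi.single h Complex.I))

/-- The ordered monomial function `x ↦ x^ℓ a = x₁^{ℓ₁} ⋯ xₙ^{ℓₙ} a`. -/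
def mono (ℓ : Fin n → ℕ) (a : ℍ) (x : Fin n → ℍ) : ℍ :=
  (List.ofFn fun h => x h ^ ℓ h).prod * a

/-- The coordinatewise map `φ_J : ℂⁿ → (ℂ_J)ⁿ ⊆ ℍⁿ`. -/
def phiJ (J : ℍ) (z : Fin n → ℂ) : Fin n → ℍ :=
  fun h => ((z h).re : ℍ) + ((z h).im : ℍ) * J

/-- The standard basis vector `e_K` of `ℝ^{𝒫(n)}`. -/
def eB (K : Finset (Fin n)) : Finset (Fin n) → ℝ := Pi.single K 1

/-- The `Δ`-product on `ℝ^{𝒫(n)}` associated with `σ`. -/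
def deltaMulR (σ : Finset (Fin n) → Finset (Fin n) → ℝ)
    (v w : Finset (Fin n) → ℝ) : Finset (Fin n) → ℝ :=
  fun K => ∑ H : Finset (Fin n), ∑ L : Finset (Fin n),
    if symmDiff H L = K then σ H L * v H * w L else 0

/-!
Both functions are induced by stem functions `F` and `G`, and `F - G` is again a stem
function. Conjugating the coordinates of `z ∈ D` indexed by `S` multiplies `(F - G)_K (z)` by
`(-1)^{|K ∩ S|}`, so agreement of `f` and `g` on the slice `ℂ_{I₁} × ⋯ × ℂ_{Iₙ}` says that
every Walsh character `S` annihilates the vector `c_K = J_K (F - G)_K (z)`. The Walsh characters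
are orthogonal, so `c = 0`; since `J_K` is invertible, `F = G` on `D`, hence `f = g` on `Ω_D`.
-/

open Finset

section Walsh

variable {ι : Type*} [DecidableEq ι]

/-- The Walsh character `(-1)^{|K ∩ S|}`. -/
def walshSign (K S : Finset ι) : ℝ := ∏ h ∈ S, if h ∈ K then -1 else 1

lemma walshSign_insert (K S : Finset ι) {a : ι} (ha : a ∉ S) :
    walshSign K (insert a S) = (if a ∈ K then -1 else 1) * walshSign K S :=
  prod_insert ha

lemma walshSign_mul_walshSign (K L S : Finset ι) :
    walshSign K S * walshSign L S = walshSign (symmDiff K L) S := by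
  rw [walshSign, walshSign, walshSign, ← prod_mul_distrib]
  refine prod_congr rfl fun h _ => ?_
  by_cases hK : h ∈ K <;> by_cases hL : h ∈ L <;> simp [hK, hL, mem_symmDiff]

lemma sum_walshSign [Fintype ι] (M : Finset ι) :
    ∑ S : Finset ι, walshSign M S = if M = ∅ then 2 ^ Fintype.card ι else 0 := by
  have hprod : ∏ h : ι, ((if h ∈ M then (-1 : ℝ) else 1) + 1)
      = ∑ S : Finset ι, walshSign M S := by
    rw [prod_add, powerset_univ]
    exact sum_congr rfl fun S _ => by simp [walshSign]
  rw [← hprod]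
  split_ifs with hM
  · norm_num [hM]
  · obtain ⟨a, ha⟩ := nonempty_iff_ne_empty.mpr hM
    exact prod_eq_zero (mem_univ a) (by simp [ha])

lemma sum_walshSign_mul_walshSign [Fintype ι] (K L : Finset ι) :
    ∑ S : Finset ι, walshSign K S * walshSign L S =
      if K = L then 2 ^ Fintype.card ι else 0 := by
  simp_rw [walshSign_mul_walshSign, sum_walshSign, ← bot_eq_empty, symmDiff_eq_bot]

theorem eq_zero_of_forall_sum_walshSign_smul_eq_zero [Fintype ι] {M : Type*}
    [AddCommGroup M] [Module ℝ M] {c : Finset ι → M}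
    (hc : ∀ S, ∑ L : Finset ι, walshSign L S • c L = 0) (K : Finset ι) : c K = 0 := by
  have hinv : ∑ S : Finset ι, walshSign K S • ∑ L : Finset ι, walshSign L S • c L =
      (2 ^ Fintype.card ι : ℝ) • c K := by
    simp_rw [smul_sum, smul_smul]
    rw [sum_comm]
    simp_rw [← sum_smul, sum_walshSign_mul_walshSign, ite_smul, zero_smul, sum_ite_eq,
      if_pos (mem_univ K)]
  simp only [hc, smul_zero, sum_const_zero] at hinv
  exact (smul_eq_zero.mp hinv.symm).resolve_left (by positivity)

end Walsh

lemma ne_zero_of_mem_Sph {J : ℍ} (hJ : J ∈ Sph) : J ≠ 0 := by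
  rintro rfl
  simp [Sph] at hJ

lemma JK_ne_zero {J : Fin n → ℍ} (hJ : ∀ h, J h ≠ 0) (K : Finset (Fin n)) : JK J K ≠ 0 :=
  List.prod_ne_zero fun h0 => by
    obtain ⟨h, -, hh⟩ := List.mem_map.mp h0
    exact hJ h hh

lemma zOf_re_im (z : Fin n → ℂ) : zOf (fun h => (z h).re) (fun h => (z h).im) = z :=
  funext fun h => Complex.re_add_im (z h)

def conjOn (S : Finset (Fin n)) (z : Fin n → ℂ) : Fin n → ℂ :=
  fun h => if h ∈ S then starRingEnd ℂ (z h) else z h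

lemma conjOn_empty (z : Fin n → ℂ) : conjOn ∅ z = z := by
  funext h; simp [conjOn]

lemma conjOn_insert (S : Finset (Fin n)) (z : Fin n → ℂ) {a : Fin n} (ha : a ∉ S) :
    conjOn (insert a S) z = conjCoord a (conjOn S z) := by
  funext k
  by_cases hk : k = a
  · subst hk
    simp [conjOn, conjCoord, ha]
  · simp [conjOn, conjCoord, hk]

section Stem

variable {D : Set (Fin n → ℂ)} {F G : Finset (Fin n) → (Fin n → ℂ) → ℍ}

lemma ConjInv.conjOn_mem (hD : ConjInv D) {z : Fin n → ℂ} (hz : z ∈ D) (S : Finset (Fin n)) :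
    conjOn S z ∈ D := by
  induction S using Finset.induction_on with
  | empty => rwa [conjOn_empty]
  | insert a S ha ih => rw [conjOn_insert S z ha]; exact hD a _ ih

lemma IsStem.sub (hF : IsStem D F) (hG : IsStem D G) : IsStem D (F - G) := by
  intro K h z hz
  simp only [Pi.sub_apply, hF K h z hz, hG K h z hz, mul_sub]

lemma IsStem.apply_conjOn (hF : IsStem D F) (hD : ConjInv D) {z : Fin n → ℂ} (hz : z ∈ D)
    (K S : Finset (Fin n)) : F K (conjOn S z) = walshSign K S • F K z := by
  induction S using Finset.induction_on with
  | empty => simp [conjOn_empty, walshSign]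
  | insert a S ha ih =>
    rw [conjOn_insert S z ha, hF K a _ (hD.conjOn_mem hz S), ih, walshSign_insert K S ha,
      mul_smul]
    by_cases haK : a ∈ K <;> simp [haK]

theorem IsStem.eq_zero_of_sum_JK_mul_eq_zero (hF : IsStem D F) (hD : ConjInv D)
    {J : Fin n → ℍ} (hJ : ∀ h, J h ≠ 0) (h0 : ∀ z ∈ D, ∑ K, JK J K * F K z = 0)
    (K : Finset (Fin n)) {z : Fin n → ℂ} (hz : z ∈ D) : F K z = 0 := by
  have hwalsh : ∀ S, ∑ L : Finset (Fin n), walshSign L S • (JK J L * F L z) = 0 := fun S => by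
    simpa [hF.apply_conjOn hD hz, mul_smul_comm] using h0 _ (hD.conjOn_mem hz S)
  exact (mul_eq_zero.mp (eq_zero_of_forall_sum_walshSign_smul_eq_zero hwalsh K)).resolve_left
    (JK_ne_zero hJ K)

end Stem

theorem stmt2_general (n : ℕ) (D : Set (Fin n → ℂ))
    (hinv : ConjInv D) (f g : (Fin n → ℍ) → ℍ)
    (hf : IsSlice D f) (hg : IsSlice D g)
    (I : Fin n → ℍ) (hI : ∀ h, I h ∈ Sph)
    (heq : ∀ x ∈ OmegaD D, (∀ h, x h ∈ CJ (I h)) → f x = g x) :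
    ∀ x ∈ OmegaD D, f x = g x := by
  obtain ⟨F, hFstem, hFind⟩ := hf
  obtain ⟨G, hGstem, hGind⟩ := hg
  have hslice : ∀ z ∈ D, ∑ K, JK I K * (F - G) K z = 0 := by
    intro z hz
    rw [← zOf_re_im z] at hz ⊢
    have hfg := heq _ ⟨_, _, I, hI, rfl, hz⟩ fun h => ⟨_, _, rfl⟩
    rw [hFind _ _ I hI hz, hGind _ _ I hI hz] at hfg
    simp [mul_sub, sum_sub_distrib, hfg]
  have hFG : ∀ K, ∀ z ∈ D, F K z = G K z := fun K z hz => sub_eq_zero.mp <|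
    (hFstem.sub hGstem).eq_zero_of_sum_JK_mul_eq_zero hinv (fun h => ne_zero_of_mem_Sph (hI h))
      hslice K hz
  rintro _ ⟨α, β, J, hJ, rfl, hz⟩
  rw [hFind α β J hJ hz, hGind α β J hJ hz]
  exact sum_congr rfl fun K _ => by rw [hFG K _ hz]

/-- **Identity principle.** -/
theorem stmt2 (n : ℕ) (hn : 0 < n) (D : Set (Fin n → ℂ)) (hne : D.Nonempty)
    (hinv : ConjInv D) (f g : (Fin n → ℍ) → ℍ)
    (hf : IsSlice D f) (hg : IsSlice D g)
    (I : Fin n → ℍ) (hI : ∀ h, I h ∈ Sph)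
    (heq : ∀ x ∈ OmegaD D, (∀ h, x h ∈ CJ (I h)) → f x = g x) :
    ∀ x ∈ OmegaD D, f x = g x :=
  stmt2_general n D hinv f g hf hg I hI heq
end
end

section
/- Let F = (F_K)_{K∈𝒫(n)} be a stem function on D such that every component F_K : D → ℍ is continuous (D carrying the topology induced from ℂⁿ). Then the induced slice function f = ℐ(F) : Ω_D → ℍ is continuous (Ω_D carrying the topology induced from ℍⁿ). -/
noncomputable section

variable {n : ℕ}

/-!
Parametrize `Ω_D` by the triples `(α, β, J)` with `J ∈ 𝕊ⁿ` and `α + iβ ∈ D`. On this parameter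
set `f` is the visibly continuous function `∑_K J_K F_K(α + iβ)`. The parametrization is proper:
`|α_h|, |β_h| ≤ |x_h|` and `𝕊` is compact, so parameters of points near `x` lie in a compact set.
Moreover two parameters of the same point have the same `α` and `β_h = ±β'_h`, so by the
conjugation invariance of `D` every limit of parameters of points converging to `x` is a
parameter of `x`. Continuity of `f` at `x` follows by compactness.
-/

open Filter Topology

theorem continuousWithinAt_image_of_isCompact_lift {X Y Z : Type*} [TopologicalSpace X]
    [TopologicalSpace Y] [T2Space Y] [TopologicalSpace Z] {Φ : X → Y} {g : X → Z} {f : Y → Z}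
    {S K : Set X} {y : Y} (hΦ : Continuous Φ) (hg : ContinuousOn g S)
    (hfg : ∀ p ∈ S, f (Φ p) = g p) (hK : IsCompact K) (hSK : ∃ V ∈ 𝓝 y, S ∩ Φ ⁻¹' V ⊆ K)
    (hfiber : ∀ p ∈ K, Φ p = y → p ∈ S) :
    ContinuousWithinAt f (Φ '' S) y := by
  set L := 𝓟 S ⊓ comap Φ (𝓝 y)
  have hSL : S ∈ L := mem_inf_of_left (mem_principal_self S)
  have hgL : Tendsto g L (𝓝 (f y)) := by
    rw [tendsto_iff_ultrafilter]
    intro U hU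
    obtain ⟨V, hV, hVK⟩ := hSK
    have hKU : K ∈ U := hU (mem_of_superset (inter_mem_inf (mem_principal_self S)
      (preimage_mem_comap hV)) hVK)
    obtain ⟨p, hpK, hUp⟩ := hK.ultrafilter_le_nhds U (le_principal_iff.mpr hKU)
    have hΦp : Φ p = y := tendsto_nhds_unique ((hΦ.tendsto p).comp hUp)
      (tendsto_comap.comp (hU.trans inf_le_right))
    have hpS := hfiber p hpK hΦp
    rw [← hΦp, hfg p hpS]
    exact (hg p hpS).tendsto.comp (tendsto_nhdsWithin_iff.mpr ⟨hUp, hU hSL⟩)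
  rw [ContinuousWithinAt, nhdsWithin, inf_comm, ← map_principal, ← Filter.push_pull,
    tendsto_map'_iff]
  exact hgL.congr' (eventuallyEq_of_mem hSL fun p hp => (hfg p hp).symm)

lemma re_eq_zero_of_mem_Sph {J : ℍ} (hJ : J ∈ Sph) : J.re = 0 := by
  have h : J * J = -1 := by rw [← sq]; exact hJ
  have h1 := congrArg QuaternionAlgebra.re h
  have h2 := congrArg QuaternionAlgebra.imI h
  have h3 := congrArg QuaternionAlgebra.imJ h
  have h4 := congrArg QuaternionAlgebra.imK h
  simp only [Quaternion.re_mul, Quaternion.imI_mul, Quaternion.imJ_mul, Quaternion.imK_mul,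
    Quaternion.re_neg, Quaternion.imI_neg, Quaternion.imJ_neg, Quaternion.imK_neg,
    Quaternion.re_one, Quaternion.imI_one, Quaternion.imJ_one, Quaternion.imK_one] at h1 h2 h3 h4
  nlinarith [sq_nonneg J.re, sq_nonneg J.imI, sq_nonneg J.imJ, sq_nonneg J.imK]

lemma normSq_eq_one_of_mem_Sph {J : ℍ} (hJ : J ∈ Sph) : Quaternion.normSq J = 1 := by
  have h := Quaternion.sq_eq_neg_normSq.mpr (re_eq_zero_of_mem_Sph hJ)
  rw [hJ, neg_inj] at h
  exact Quaternion.coe_injective h.symm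

lemma isCompact_Sph : IsCompact Sph := by
  refine (isCompact_sphere (0 : ℍ) 1).of_isClosed_subset
    (isClosed_eq (continuous_pow 2) continuous_const) fun J hJ => ?_
  have h := normSq_eq_one_of_mem_Sph hJ
  rw [Quaternion.normSq_eq_norm_mul_self] at h
  rw [mem_sphere_zero_iff_norm]
  nlinarith [norm_nonneg J]

lemma re_add_mul_of_mem_Sph {J : ℍ} (hJ : J ∈ Sph) (a b : ℝ) :
    ((a : ℍ) + (b : ℍ) * J).re = a := by
  simp [re_eq_zero_of_mem_Sph hJ]

lemma normSq_add_mul_of_mem_Sph {J : ℍ} (hJ : J ∈ Sph) (a b : ℝ) :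
    Quaternion.normSq ((a : ℍ) + (b : ℍ) * J) = a ^ 2 + b ^ 2 := by
  rw [Quaternion.normSq_add, Quaternion.normSq_coe, Quaternion.coe_mul_eq_smul,
    Quaternion.normSq_smul, normSq_eq_one_of_mem_Sph hJ]
  simp [re_eq_zero_of_mem_Sph hJ]

lemma abs_le_norm_add_mul_of_mem_Sph {J : ℍ} (hJ : J ∈ Sph) (a b : ℝ) :
    |a| ≤ ‖(a : ℍ) + (b : ℍ) * J‖ ∧ |b| ≤ ‖(a : ℍ) + (b : ℍ) * J‖ := by
  have h := normSq_add_mul_of_mem_Sph hJ a b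
  rw [Quaternion.normSq_eq_norm_mul_self] at h
  constructor <;> refine abs_le_of_sq_le_sq ?_ (norm_nonneg _) <;>
    nlinarith [sq_nonneg a, sq_nonneg b]

lemma continuous_JK (K : Finset (Fin n)) : Continuous fun J : Fin n → ℍ => JK J K := by
  unfold JK
  induction K.sort (· ≤ ·) with
  | nil => exact continuous_const
  | cons a t ih =>
    simp only [List.map_cons, List.prod_cons]
    exact (continuous_apply a).mul ih

lemma continuous_zOf : Continuous fun p : (Fin n → ℝ) × (Fin n → ℝ) => zOf p.1 p.2 := by
  unfold zOf; fun_prop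

lemma continuous_ptOf :
    Continuous fun p : (Fin n → ℝ) × (Fin n → ℝ) × (Fin n → ℍ) => ptOf p.1 p.2.1 p.2.2 := by
  refine continuous_pi fun h => ?_
  have hcoe := Quaternion.continuous_coe
  unfold ptOf; fun_prop

section SliceParams

variable {D : Set (Fin n → ℂ)}

theorem ConjInv.mem_of_forall_eq_or_eq_conj (hD : ConjInv D) {z w : Fin n → ℂ} (hz : z ∈ D)
    (hw : ∀ h, w h = z h ∨ w h = starRingEnd ℂ (z h)) :
    w ∈ D := by
  classical
  suffices hs : ∀ s : Finset (Fin n), (fun h => if h ∈ s then w h else z h) ∈ D by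
    simpa using hs Finset.univ
  intro s
  induction s using Finset.induction_on with
  | empty => simpa using hz
  | insert a s ha ih =>
    set v := fun h => if h ∈ s then w h else z h
    have hva : v a = z a := if_neg ha
    have hupd : (fun h => if h ∈ insert a s then w h else z h) = Function.update v a (w a) := by
      ext h
      by_cases hh : h = a
      · subst hh; simp
      · simp [hh, v]
    rw [hupd]
    rcases hw a with e | e
    · rwa [e, ← hva, Function.update_eq_self]
    · rw [e, ← hva]
      exact hD a v ih

def sliceParams (D : Set (Fin n → ℂ)) : Set ((Fin n → ℝ) × (Fin n → ℝ) × (Fin n → ℍ)) :=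
  {p | (∀ h, p.2.2 h ∈ Sph) ∧ zOf p.1 p.2.1 ∈ D}

lemma OmegaD_eq_image_sliceParams :
    OmegaD D = (fun p => ptOf p.1 p.2.1 p.2.2) '' sliceParams D := by
  ext x
  constructor
  · rintro ⟨α, β, J, hJ, rfl, hz⟩
    exact ⟨(α, β, J), ⟨hJ, hz⟩, rfl⟩
  · rintro ⟨⟨α, β, J⟩, ⟨hJ, hz⟩, rfl⟩
    exact ⟨α, β, J, hJ, rfl, hz⟩

lemma norm_le_norm_ptOf {α β : Fin n → ℝ} {J : Fin n → ℍ} (hJ : ∀ h, J h ∈ Sph) :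
    ‖α‖ ≤ ‖ptOf α β J‖ ∧ ‖β‖ ≤ ‖ptOf α β J‖ := by
  have hle h := (abs_le_norm_add_mul_of_mem_Sph (hJ h) (α h) (β h)).imp
    (·.trans (norm_le_pi_norm (ptOf α β J) h)) (·.trans (norm_le_pi_norm (ptOf α β J) h))
  exact ⟨pi_norm_le_iff_of_nonneg (norm_nonneg _) |>.2 fun h => (hle h).1,
    pi_norm_le_iff_of_nonneg (norm_nonneg _) |>.2 fun h => (hle h).2⟩

lemma mem_sliceParams_of_ptOf_eq (hD : ConjInv D)
    {p q : (Fin n → ℝ) × (Fin n → ℝ) × (Fin n → ℍ)}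
    (hp : p ∈ sliceParams D) (hq : ∀ h, q.2.2 h ∈ Sph)
    (hpq : ptOf q.1 q.2.1 q.2.2 = ptOf p.1 p.2.1 p.2.2) : q ∈ sliceParams D := by
  refine ⟨hq, hD.mem_of_forall_eq_or_eq_conj hp.2 fun h => ?_⟩
  have hph := congrFun hpq h
  have hα : q.1 h = p.1 h := by
    simpa only [ptOf, re_add_mul_of_mem_Sph (hq h), re_add_mul_of_mem_Sph (hp.1 h)]
      using congrArg QuaternionAlgebra.re hph
  have hβ : q.2.1 h ^ 2 = p.2.1 h ^ 2 := by
    have := congrArg Quaternion.normSq hph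
    simp only [ptOf, normSq_add_mul_of_mem_Sph (hq h), normSq_add_mul_of_mem_Sph (hp.1 h),
      hα] at this
    linarith
  rcases sq_eq_sq_iff_eq_or_eq_neg.mp hβ with e | e
  · left; simp [zOf, hα, e]
  · right; simp [zOf, hα, e]

lemma continuousOn_sum_JK_mul_sliceParams {F : Finset (Fin n) → (Fin n → ℂ) → ℍ}
    (hF : ∀ K, ContinuousOn (F K) D) :
    ContinuousOn (fun p => ∑ K, JK p.2.2 K * F K (zOf p.1 p.2.1)) (sliceParams D) :=
  continuousOn_finsetSum _ fun K _ =>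
    ((continuous_JK K).comp continuous_snd.snd).continuousOn.mul
      ((hF K).comp (continuous_zOf.comp (continuous_fst.prodMk continuous_snd.fst)).continuousOn
        fun _ hp => hp.2)

end SliceParams

theorem stmt7_general (n : ℕ) (D : Set (Fin n → ℂ))
    (hinv : ConjInv D) (F : Finset (Fin n) → (Fin n → ℂ) → ℍ)
    (hcont : ∀ K, ContinuousOn (F K) D)
    (f : (Fin n → ℍ) → ℍ) (hf : Induces D F f) :
    ContinuousOn f (OmegaD D) := by
  rw [OmegaD_eq_image_sliceParams]
  rintro _ ⟨p₀, hp₀, rfl⟩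
  set R := ‖ptOf p₀.1 p₀.2.1 p₀.2.2‖ + 1
  have hK := (isCompact_closedBall (0 : Fin n → ℝ) R).prod
    ((isCompact_closedBall (0 : Fin n → ℝ) R).prod
      (isCompact_univ_pi fun (_ : Fin n) => isCompact_Sph))
  refine continuousWithinAt_image_of_isCompact_lift continuous_ptOf
    (continuousOn_sum_JK_mul_sliceParams hcont) (fun p hp => hf _ _ _ hp.1 hp.2) hK
    ⟨Metric.ball 0 R, Metric.isOpen_ball.mem_nhds (by simp [R]), ?_⟩
    fun q hq hqp => mem_sliceParams_of_ptOf_eq hinv hp₀ (fun h => hq.2.2 h trivial) hqp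
  rintro p ⟨hp, hpR⟩
  have hbound := norm_le_norm_ptOf (α := p.1) (β := p.2.1) hp.1
  rw [Set.mem_preimage, mem_ball_zero_iff] at hpR
  exact ⟨mem_closedBall_zero_iff.2 (hbound.1.trans hpR.le),
    mem_closedBall_zero_iff.2 (hbound.2.trans hpR.le), fun h _ => hp.1 h⟩

/-- A slice function induced by a continuous stem function is
continuous. -/
theorem stmt7 (n : ℕ) (hn : 0 < n) (D : Set (Fin n → ℂ)) (hne : D.Nonempty)
    (hinv : ConjInv D) (F : Finset (Fin n) → (Fin n → ℂ) → ℍ)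
    (hF : IsStem D F) (hcont : ∀ K, ContinuousOn (F K) D)
    (f : (Fin n → ℍ) → ℍ) (hf : Induces D F f) :
    ContinuousOn f (OmegaD D) :=
  stmt7_general n D hinv F hcont f hf

end
end

section
/- (a) If f, g : Ω_D → ℍ are slice regular, then f⊙g is slice regular. (b) If f : Ω_D → ℍ is a slice preserving slice function, then for all slice functions g, h : Ω_D → ℍ one has f⊙g = g⊙f, (f⊙g)⊙h = f⊙(g⊙h), (g⊙f)⊙h = g⊙(f⊙h), and (g⊙h)⊙f = g⊙(h⊙f); in particular the slice preserving slice regular functions lie in the center of the real algebra of slice functions with the slice tensor product. -/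
noncomputable section

variable {n : ℕ}

/-! The sign `σ(A, B) = (-1)^|A ∩ B|` is symmetric and multiplicative in each argument with
respect to `∆`. Multiplicativity makes it a 2-cocycle, `σ(A,B) σ(A∆B,C) = σ(B,C) σ(A,B∆C)`, which
is exactly what associativity of the stem product needs; symmetry gives commutativity as soon as
one factor has real components. For holomorphy, the Cauchy–Riemann system of `F` is equivalent to
the single relation `∂_{β_h} F_{H ∆ {h}} = σ(H, {h}) ∂_{α_h} F_H` for all `H`, and the Leibniz rule
together with multiplicativity of `σ` carries this relation from the factors to the product. -/

open scoped symmDiff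

theorem Finset.card_symmDiff_add_two_mul_card_inter {α : Type*} [DecidableEq α]
    (A B : Finset α) : (A ∆ B).card + 2 * (A ∩ B).card = A.card + B.card := by
  have hdisj : Disjoint (A ∆ B) (A ∩ B) := disjoint_symmDiff_inf A B
  have hunion : A ∆ B ∪ A ∩ B = A ∪ B := symmDiff_sup_inf A B
  have h1 := Finset.card_union_of_disjoint hdisj
  have h2 := Finset.card_union_add_card_inter A B
  rw [hunion] at h1
  omega

theorem Finset.neg_one_pow_card_symmDiff {α R : Type*} [DecidableEq α] [Monoid R]
    [HasDistribNeg R] (A B : Finset α) :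
    (-1 : R) ^ (A ∆ B).card = (-1) ^ A.card * (-1) ^ B.card := by
  rw [← pow_add, ← A.card_symmDiff_add_two_mul_card_inter B, pow_add, pow_mul]
  simp

theorem Finset.symmDiff_singleton_of_notMem {α : Type*} [DecidableEq α] {s : Finset α} {a : α}
    (ha : a ∉ s) : s ∆ {a} = insert a s := by
  ext b
  by_cases hb : b = a <;> simp [Finset.mem_symmDiff, hb, ha]

theorem Finset.symmDiff_singleton_of_mem {α : Type*} [DecidableEq α] {s : Finset α} {a : α}
    (ha : a ∈ s) : s ∆ {a} = s.erase a := by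
  ext b
  by_cases hb : b = a <;> simp [Finset.mem_symmDiff, hb, ha]

theorem Fintype.sum_symmDiff_comp {β M : Type*} [Fintype β] [GeneralizedBooleanAlgebra β]
    [AddCommMonoid M] (A : β) (f : β → M) : ∑ B, f (A ∆ B) = ∑ B, f B :=
  Equiv.sum_comp (symmDiff_right_involutive A).toPerm f

section Signs

variable {n : ℕ}

theorem sigmaT_comm (A B : Finset (Fin n)) : sigmaT A B = sigmaT B A := by
  rw [sigmaT, sigmaT, Finset.inter_comm]

theorem sigmaT_symmDiff_left (A B C : Finset (Fin n)) :
    sigmaT (A ∆ B) C = sigmaT A C * sigmaT B C := by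
  have hdistrib : A ∆ B ∩ C = (A ∩ C) ∆ (B ∩ C) := inf_symmDiff_distrib_right A B C
  rw [sigmaT, hdistrib, Finset.neg_one_pow_card_symmDiff]
  rfl

theorem sigmaT_symmDiff_right (A B C : Finset (Fin n)) :
    sigmaT A (B ∆ C) = sigmaT A B * sigmaT A C := by
  rw [sigmaT_comm, sigmaT_symmDiff_left, sigmaT_comm B, sigmaT_comm C]

theorem sigmaT_mul_self (A B : Finset (Fin n)) : sigmaT A B * sigmaT A B = 1 := by
  rw [sigmaT, ← pow_add, Even.neg_one_pow ⟨_, rfl⟩]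

theorem sigmaT_cocycle (A B C : Finset (Fin n)) :
    sigmaT A B * sigmaT (A ∆ B) C = sigmaT B C * sigmaT A (B ∆ C) := by
  rw [sigmaT_symmDiff_left, sigmaT_symmDiff_right]
  ring

theorem sigmaT_singleton_right (A : Finset (Fin n)) (h : Fin n) :
    sigmaT A {h} = if h ∈ A then -1 else 1 := by
  by_cases hA : h ∈ A <;> simp [sigmaT, hA]

end Signs

section StemProduct

variable {n : ℕ} (σ : Finset (Fin n) → Finset (Fin n) → ℝ)

theorem SP_eq_sum (F G : Finset (Fin n) → (Fin n → ℂ) → ℍ) (K : Finset (Fin n))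
    (z : Fin n → ℂ) :
    SP σ F G K z = ∑ H : Finset (Fin n), σ H (H ∆ K) • (F H z * G (H ∆ K) z) := by
  refine Finset.sum_congr rfl fun H _ => ?_
  have hL : ∀ L : Finset (Fin n), H ∆ L = K ↔ L = H ∆ K := fun L => by
    constructor <;> rintro rfl <;> simp
  simp only [hL, Finset.sum_ite_eq', Finset.mem_univ, if_true]

theorem SP_assoc (hσ : ∀ A B C, σ A B * σ (A ∆ B) C = σ B C * σ A (B ∆ C))
    (F G H : Finset (Fin n) → (Fin n → ℂ) → ℍ) :
    SP σ (SP σ F G) H = SP σ F (SP σ G H) := by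
  funext K z
  simp only [SP_eq_sum, Finset.sum_mul, Finset.mul_sum, Finset.smul_sum]
  rw [Finset.sum_comm]
  refine Finset.sum_congr rfl fun A _ => ?_
  rw [← Fintype.sum_symmDiff_comp A]
  refine Finset.sum_congr rfl fun B _ => ?_
  have hC : B ∆ (A ∆ B ∆ K) = A ∆ K := by
    rw [symmDiff_assoc, symmDiff_left_comm, symmDiff_symmDiff_cancel_left]
  rw [symmDiff_symmDiff_cancel_left, ← hC, smul_mul_assoc, mul_smul_comm, smul_smul, smul_smul,
    mul_assoc, mul_comm (σ (A ∆ B) _), hσ, mul_comm (σ B _), symmDiff_symmDiff_cancel_left]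

theorem SP_apply_comm (hσ : ∀ A B, σ A B = σ B A) (F G : Finset (Fin n) → (Fin n → ℂ) → ℍ)
    (z : Fin n → ℂ) (hF : ∀ H, ∃ r : ℝ, F H z = (r : ℍ)) (K : Finset (Fin n)) :
    SP σ F G K z = SP σ G F K z := by
  rw [SP_eq_sum, SP_eq_sum, ← Fintype.sum_symmDiff_comp K (fun H => σ H (H ∆ K) • _)]
  refine Finset.sum_congr rfl fun H _ => ?_
  obtain ⟨r, hr⟩ := hF (H ∆ K)
  rw [symmDiff_comm K H, symmDiff_symmDiff_cancel_right, hσ, hr, Quaternion.coe_commutes]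

theorem isStem_SP {D : Set (Fin n → ℂ)} {F G : Finset (Fin n) → (Fin n → ℂ) → ℍ}
    (hF : IsStem D F) (hG : IsStem D G) : IsStem D (SP σ F G) := by
  intro K h z hz
  simp only [SP_eq_sum, Finset.mul_sum]
  refine Finset.sum_congr rfl fun H _ => ?_
  rw [hF H h z hz, hG _ h z hz]
  by_cases hH : h ∈ H <;> by_cases hK : h ∈ K <;> simp [Finset.mem_symmDiff, hH, hK]

theorem stemC1_SP {D : Set (Fin n → ℂ)} {F G : Finset (Fin n) → (Fin n → ℂ) → ℍ}
    (hF : StemC1 D F) (hG : StemC1 D G) : StemC1 D (SP σ F G) := by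
  intro K
  simp only [funext (SP_eq_sum σ F G K)]
  exact ContDiffOn.sum fun H _ => ((hF H).mul (hG _)).const_smul _

theorem fderiv_SP_apply {F G : Finset (Fin n) → (Fin n → ℂ) → ℍ} {z : Fin n → ℂ}
    (hF : ∀ H, DifferentiableAt ℝ (F H) z) (hG : ∀ H, DifferentiableAt ℝ (G H) z)
    (K : Finset (Fin n)) (v : Fin n → ℂ) :
    fderiv ℝ (SP σ F G K) z v = ∑ H : Finset (Fin n), σ H (H ∆ K) •
      (fderiv ℝ (F H) z v * G (H ∆ K) z + F H z * fderiv ℝ (G (H ∆ K)) z v) := by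
  have hderiv := HasFDerivAt.fun_sum (u := Finset.univ) fun H _ =>
    (((hF H).hasFDerivAt.fun_mul' (hG (H ∆ K)).hasFDerivAt).fun_const_smul (σ H (H ∆ K)))
  rw [funext (SP_eq_sum σ F G K), hderiv.fderiv]
  simp [add_comm]

end StemProduct

section Holomorphy

variable {n : ℕ} {D : Set (Fin n → ℂ)}

theorem stemHolo_iff {F : Finset (Fin n) → (Fin n → ℂ) → ℍ} :
    StemHolo D F ↔ ∀ z ∈ D, ∀ (h : Fin n) (H : Finset (Fin n)),
      fderiv ℝ (F (H ∆ {h})) z (Pi.single h Complex.I) =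
        sigmaT H {h} • fderiv ℝ (F H) z (Pi.single h 1) := by
  constructor
  · intro hF z hz h H
    by_cases hH : h ∈ H
    · have hCR := (hF z hz h (H.erase h) (Finset.notMem_erase h H)).2
      rw [Finset.insert_erase hH] at hCR
      rw [Finset.symmDiff_singleton_of_mem hH, hCR, sigmaT_singleton_right, if_pos hH, neg_one_smul]
    · rw [Finset.symmDiff_singleton_of_notMem hH, sigmaT_singleton_right, if_neg hH, one_smul]
      exact (hF z hz h H hH).1.symm
  · intro hF z hz h K hK
    have hCR := hF z hz h K
    have hCR' := hF z hz h (insert h K)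
    rw [Finset.symmDiff_singleton_of_notMem hK, sigmaT_singleton_right, if_neg hK,
      one_smul] at hCR
    rw [Finset.symmDiff_singleton_of_mem (Finset.mem_insert_self h K), Finset.erase_insert hK,
      sigmaT_singleton_right, if_pos (Finset.mem_insert_self h K), neg_one_smul] at hCR'
    exact ⟨hCR.symm, hCR'⟩

theorem stemHolo_SPT (hD : IsOpen D) {F G : Finset (Fin n) → (Fin n → ℂ) → ℍ}
    (hF1 : StemC1 D F) (hG1 : StemC1 D G) (hF : StemHolo D F) (hG : StemHolo D G) :
    StemHolo D (SPT F G) := by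
  rw [stemHolo_iff] at hF hG ⊢
  intro z hz h K
  have hdiff {F : Finset (Fin n) → (Fin n → ℂ) → ℍ} (hF1 : StemC1 D F) (H : Finset (Fin n)) :
      DifferentiableAt ℝ (F H) z :=
    ((hF1 H).contDiffAt (hD.mem_nhds hz)).differentiableAt one_ne_zero
  simp only [SPT, fderiv_SP_apply _ (hdiff hF1) (hdiff hG1), smul_add, Finset.sum_add_distrib,
    Finset.smul_sum]
  congr 1
  · conv_lhs => rw [← Fintype.sum_symmDiff_comp {h}]
    refine Finset.sum_congr rfl fun H _ => ?_
    have hsign : sigmaT (H ∆ {h}) (H ∆ K) * sigmaT H {h} = sigmaT K {h} * sigmaT H (H ∆ K) := by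
      simp only [sigmaT_symmDiff_left, sigmaT_symmDiff_right, sigmaT_comm {h}]
      linear_combination (sigmaT H H * sigmaT H K * sigmaT K {h}) * sigmaT_mul_self H {h}
    rw [symmDiff_comm {h} H, symmDiff_symmDiff_symmDiff_comm, symmDiff_self, symmDiff_bot, hF z hz,
      smul_mul_assoc, smul_smul, smul_smul, hsign]
  · refine Finset.sum_congr rfl fun H _ => ?_
    have hsign : sigmaT H (H ∆ K ∆ {h}) * sigmaT (H ∆ K) {h} = sigmaT K {h} * sigmaT H (H ∆ K) := by
      simp only [sigmaT_symmDiff_left, sigmaT_symmDiff_right]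
      linear_combination (sigmaT H H * sigmaT H K * sigmaT K {h}) * sigmaT_mul_self H {h}
    rw [← symmDiff_assoc, hG z hz, mul_smul_comm, smul_smul, smul_smul, hsign]

end Holomorphy

theorem stmt14_general (n : ℕ) (D : Set (Fin n → ℂ)) (hD : IsOpen D) :
    (∀ (F G : Finset (Fin n) → (Fin n → ℂ) → ℍ) (f g fg : (Fin n → ℍ) → ℍ),
      IsStem D F → StemC1 D F → StemHolo D F → Induces D F f →
      IsStem D G → StemC1 D G → StemHolo D G → Induces D G g →
      Induces D (SPT F G) fg → IsSliceRegular D fg) ∧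
    (∀ F G H : Finset (Fin n) → (Fin n → ℂ) → ℍ,
      IsStem D F → IsStem D G → IsStem D H →
      (∀ K : Finset (Fin n), ∀ z ∈ D, ∃ r : ℝ, F K z = (r : ℍ)) →
      ∀ (α β : Fin n → ℝ) (J : Fin n → ℍ), (∀ k, J k ∈ Sph) → zOf α β ∈ D →
        (∑ K : Finset (Fin n), JK J K * SPT F G K (zOf α β) =
          ∑ K : Finset (Fin n), JK J K * SPT G F K (zOf α β)) ∧
        (∑ K : Finset (Fin n), JK J K * SPT (SPT F G) H K (zOf α β) =
          ∑ K : Finset (Fin n), JK J K * SPT F (SPT G H) K (zOf α β)) ∧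
        (∑ K : Finset (Fin n), JK J K * SPT (SPT G F) H K (zOf α β) =
          ∑ K : Finset (Fin n), JK J K * SPT G (SPT F H) K (zOf α β)) ∧
        (∑ K : Finset (Fin n), JK J K * SPT (SPT G H) F K (zOf α β) =
          ∑ K : Finset (Fin n), JK J K * SPT G (SPT H F) K (zOf α β))) := by
  refine ⟨fun F G _ _ fg hFs hF1 hFh _ hGs hG1 hGh _ hfg => ?_,
    fun F G H _ _ _ hreal α β J _ hz => ?_⟩
  · exact ⟨SPT F G, isStem_SP _ hFs hGs, stemC1_SP _ hF1 hG1, stemHolo_SPT hD hF1 hG1 hFh hGh, hfg⟩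
  · simp only [SPT, SP_assoc sigmaT sigmaT_cocycle, SP_apply_comm sigmaT sigmaT_comm F G _
      (fun K => hreal K _ hz), and_self]

/-- (a) The slice tensor product of slice regular functions is
slice regular. (b) Slice preserving slice functions commute and associate with all
slice functions under the slice tensor product; in particular slice preserving
slice regular functions lie in the center. -/
theorem stmt14 (n : ℕ) (hn : 0 < n) (D : Set (Fin n → ℂ)) (hne : D.Nonempty)
    (hinv : ConjInv D) (hD : IsOpen D) :
    (∀ (F G : Finset (Fin n) → (Fin n → ℂ) → ℍ) (f g fg : (Fin n → ℍ) → ℍ),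
      IsStem D F → StemC1 D F → StemHolo D F → Induces D F f →
      IsStem D G → StemC1 D G → StemHolo D G → Induces D G g →
      Induces D (SPT F G) fg → IsSliceRegular D fg) ∧
    (∀ F G H : Finset (Fin n) → (Fin n → ℂ) → ℍ,
      IsStem D F → IsStem D G → IsStem D H →
      (∀ K : Finset (Fin n), ∀ z ∈ D, ∃ r : ℝ, F K z = (r : ℍ)) →
      ∀ (α β : Fin n → ℝ) (J : Fin n → ℍ), (∀ k, J k ∈ Sph) → zOf α β ∈ D →
        (∑ K : Finset (Fin n), JK J K * SPT F G K (zOf α β) =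
          ∑ K : Finset (Fin n), JK J K * SPT G F K (zOf α β)) ∧
        (∑ K : Finset (Fin n), JK J K * SPT (SPT F G) H K (zOf α β) =
          ∑ K : Finset (Fin n), JK J K * SPT F (SPT G H) K (zOf α β)) ∧
        (∑ K : Finset (Fin n), JK J K * SPT (SPT G F) H K (zOf α β) =
          ∑ K : Finset (Fin n), JK J K * SPT G (SPT F H) K (zOf α β)) ∧
        (∑ K : Finset (Fin n), JK J K * SPT (SPT G H) F K (zOf α β) =
          ∑ K : Finset (Fin n), JK J K * SPT G (SPT H F) K (zOf α β))) :=
  stmt14_general n D hD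
end
end
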